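/- arXiv:2301.01410 — 8 statements merged into one kernel-verified Lean document; each statement's English description precedes it below -/
import Mathlib

section
/- The H-score of a feature map f: X → ℝ^d equals (1/2)(E_{P_{XX'}}[k_G(X,X')] − E_{P_X P_{X'}}[k_G(X,X')]), where G = span{f_1,...,f_d}, k_G is the projection kernel of G, and P_{XX'}(x,x') = Σ_y P_Y(y) P_{X|Y=y}(x) P_{X|Y=y}(x'). -/
open Matrix

lemma auxL {d : ℕ} (A : Matrix (Fin d) (Fin d) ℝ) {ι : Type*} [Fintype ι]
    (c : ι → ℝ) (g : ι → Fin d → ℝ) (w : Fin d → ℝ) :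
    (∑ x, c x • g x) ⬝ᵥ (A *ᵥ w) = ∑ x, c x * (g x ⬝ᵥ (A *ᵥ w)) := by
  simp only [dotProduct, Finset.sum_mul, Finset.mul_sum, Finset.sum_apply,
    Pi.smul_apply, smul_eq_mul, mul_assoc]
  rw [Finset.sum_comm]

lemma auxR0 {d : ℕ} {ι : Type*} [Fintype ι]
    (c : ι → ℝ) (g : ι → Fin d → ℝ) (u : Fin d → ℝ) :
    u ⬝ᵥ (∑ x, c x • g x) = ∑ x, c x * (u ⬝ᵥ g x) := by
  simp only [dotProduct, Finset.mul_sum, Finset.sum_apply, Pi.smul_apply, smul_eq_mul]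
  rw [Finset.sum_comm]
  exact Finset.sum_congr rfl fun x _ => Finset.sum_congr rfl fun i _ => by ring

lemma auxR {d : ℕ} (A : Matrix (Fin d) (Fin d) ℝ) {ι : Type*} [Fintype ι]
    (c : ι → ℝ) (g : ι → Fin d → ℝ) (w : Fin d → ℝ) :
    w ⬝ᵥ (A *ᵥ ∑ x, c x • g x) = ∑ x, c x * (w ⬝ᵥ (A *ᵥ g x)) := by
  rw [dotProduct_mulVec, auxR0]
  exact Finset.sum_congr rfl fun x _ => by rw [dotProduct_mulVec]

lemma auxSub {d : ℕ} (A : Matrix (Fin d) (Fin d) ℝ) (u v : Fin d → ℝ) :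
    (u - v) ⬝ᵥ (A *ᵥ (u - v))
      = u ⬝ᵥ (A *ᵥ u) - u ⬝ᵥ (A *ᵥ v) - v ⬝ᵥ (A *ᵥ u) + v ⬝ᵥ (A *ᵥ v) := by
  simp only [sub_dotProduct, mulVec_sub, dotProduct_sub]
  ring

/-- The H-score of a feature map `f : X → ℝ^d` equals
`(1/2)(E_{P_{XX'}}[k_G(X,X')] - E_{P_X P_{X'}}[k_G(X,X')])`, where `k_G` is
the projection kernel of `G = span{f_1,...,f_d}` and `P_{XX'}` is obtained by
drawing `Y ~ P_Y` and then `X, X'` conditionally i.i.d. given `Y`.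
Here `R` plays the role of `Λ_f^{-1/2}` (any matrix with `Rᵀ R = Λ_f⁻¹`). -/
theorem stmt3 {X Y : Type*} [Fintype X] [Fintype Y]
    (q : Y → ℝ) (hq : ∀ y, 0 ≤ q y) (hq1 : ∑ y, q y = 1)
    (W : Y → X → ℝ) (hW : ∀ y x, 0 ≤ W y x) (hW1 : ∀ y, ∑ x, W y x = 1)
    {d : ℕ} (f : X → Fin d → ℝ)
    (pX : X → ℝ) (hpX : ∀ x, pX x = ∑ y, q y * W y x)
    (μ : Fin d → ℝ) (hμ : μ = ∑ x, pX x • f x)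
    (ft : X → Fin d → ℝ) (hft : ∀ x, ft x = f x - μ)
    (Λ : Matrix (Fin d) (Fin d) ℝ)
    (hΛ : ∀ i j, Λ i j = ∑ x, pX x * f x i * f x j)
    (hΛinv : IsUnit Λ)
    (R : Matrix (Fin d) (Fin d) ℝ) (hR : Rᵀ * R = Λ⁻¹) :
    (1 / 2) * ∑ y, q y *
        ((R *ᵥ ∑ x, W y x • ft x) ⬝ᵥ (R *ᵥ ∑ x, W y x • ft x))
      = (1 / 2) *
        ((∑ y, q y * ∑ x, ∑ x', W y x * W y x' * (f x ⬝ᵥ (Λ⁻¹ *ᵥ f x')))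
          - ∑ x, ∑ x', pX x * pX x' * (f x ⬝ᵥ (Λ⁻¹ *ᵥ f x'))) := by
  have key : ∀ v w : Fin d → ℝ, (R *ᵥ v) ⬝ᵥ (R *ᵥ w) = v ⬝ᵥ (Λ⁻¹ *ᵥ w) := by
    intro v w
    rw [← hR, dotProduct_mulVec, dotProduct_mulVec, ← vecMul_vecMul, vecMul_transpose]
  have sym : ∀ v w : Fin d → ℝ, v ⬝ᵥ (Λ⁻¹ *ᵥ w) = w ⬝ᵥ (Λ⁻¹ *ᵥ v) := by
    intro v w
    rw [← key, ← key, dotProduct_comm]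
  set g : Y → Fin d → ℝ := fun y => ∑ x, W y x • f x with hg
  have hsum : ∀ y, ∑ x, W y x • ft x = g y - μ := by
    intro y
    simp only [hft, smul_sub, Finset.sum_sub_distrib, hg, ← Finset.sum_smul, hW1 y, one_smul]
  have hμg : ∑ y, q y • g y = μ := by
    rw [hμ]
    simp only [hg, Finset.smul_sum, smul_smul]
    rw [Finset.sum_comm]
    refine Finset.sum_congr rfl fun x _ => ?_
    rw [hpX, ← Finset.sum_smul]
  have hRHS1 : ∀ y, ∑ x, ∑ x', W y x * W y x' * (f x ⬝ᵥ (Λ⁻¹ *ᵥ f x'))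
      = g y ⬝ᵥ (Λ⁻¹ *ᵥ g y) := by
    intro y
    rw [hg]
    simp only
    rw [auxL Λ⁻¹ (W y) f]
    refine Finset.sum_congr rfl fun x _ => ?_
    rw [auxR Λ⁻¹ (W y) f, Finset.mul_sum]
    exact Finset.sum_congr rfl fun x' _ => by ring
  have hRHS2 : ∑ x, ∑ x', pX x * pX x' * (f x ⬝ᵥ (Λ⁻¹ *ᵥ f x')) = μ ⬝ᵥ (Λ⁻¹ *ᵥ μ) := by
    rw [hμ, auxL Λ⁻¹ pX f]
    refine Finset.sum_congr rfl fun x _ => ?_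
    rw [auxR Λ⁻¹ pX f, Finset.mul_sum]
    exact Finset.sum_congr rfl fun x' _ => by ring
  have h1 : ∑ y, q y * (g y ⬝ᵥ (Λ⁻¹ *ᵥ μ)) = μ ⬝ᵥ (Λ⁻¹ *ᵥ μ) := by
    rw [← auxL Λ⁻¹ q g μ, hμg]
  have h2 : ∑ y, q y * (μ ⬝ᵥ (Λ⁻¹ *ᵥ g y)) = μ ⬝ᵥ (Λ⁻¹ *ᵥ μ) := by
    rw [← auxR Λ⁻¹ q g μ, hμg]
  have hLHS : ∑ y, q y * ((R *ᵥ ∑ x, W y x • ft x) ⬝ᵥ (R *ᵥ ∑ x, W y x • ft x))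
      = (∑ y, q y * (g y ⬝ᵥ (Λ⁻¹ *ᵥ g y))) - μ ⬝ᵥ (Λ⁻¹ *ᵥ μ) := by
    have step : ∀ y, q y * ((R *ᵥ ∑ x, W y x • ft x) ⬝ᵥ (R *ᵥ ∑ x, W y x • ft x))
        = q y * (g y ⬝ᵥ (Λ⁻¹ *ᵥ g y)) - q y * (g y ⬝ᵥ (Λ⁻¹ *ᵥ μ))
          - q y * (μ ⬝ᵥ (Λ⁻¹ *ᵥ g y)) + q y * (μ ⬝ᵥ (Λ⁻¹ *ᵥ μ)) := by
      intro y
      rw [key, hsum, auxSub]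
      ring
    rw [Finset.sum_congr rfl fun y _ => step y]
    simp only [Finset.sum_add_distrib, Finset.sum_sub_distrib, h1, h2, ← Finset.sum_mul, hq1]
    ring
  rw [hLHS]
  simp only [hRHS1, hRHS2]
end

section
/- Suppose Y is binary and P_{X,Y}(x,y) = P_X(x)P_Y(y)(1 + ρ f*(x) g*(y)) with E[f*(X)] = E[g*(Y)] = 0, E[(f*(X))²] = E[(g*(Y))²] = 1, ρ > 0. Then for any subspace G of the feature space, the H-score H(G) of G equals (ρ²/2)·‖Π_G f*‖², where Π_G denotes orthogonal projection onto G in the P_X-weighted inner product. -/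
/-- Binary modal decomposition `P_{X,Y}(x,y) = P_X(x)P_Y(y)(1 + ρ f*(x)g*(y))`
with `f*, g*` zero-mean unit-variance.  For a subspace `G` spanned by an
orthonormal family `g i` (with projection kernel `k_G(x,x') = ∑ i g i x g i x'`),
the H-score of `G`, `H(G) = (1/2)(E_{P_{XX'}}[k_G] - E_{P_X P_{X'}}[k_G])`,
equals `(ρ²/2) ‖Π_G f*‖²`, where `h = Π_G f*` is the orthogonal projection of
`f*` onto `G` in the `P_X`-weighted inner product. -/
theorem stmt4 {X : Type*} [Fintype X]
    (pX : X → ℝ) (hpX : ∀ x, 0 < pX x) (hpX1 : ∑ x, pX x = 1)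
    (pY1 pYm1 : ℝ) (hpY : 0 ≤ pY1 ∧ 0 ≤ pYm1) (hpY1 : pY1 + pYm1 = 1)
    (fs : X → ℝ) (hfm : ∑ x, pX x * fs x = 0) (hfv : ∑ x, pX x * fs x ^ 2 = 1)
    (gs1 gsm1 : ℝ) (hgm : pY1 * gs1 + pYm1 * gsm1 = 0)
    (hgv : pY1 * gs1 ^ 2 + pYm1 * gsm1 ^ 2 = 1)
    (ρ : ℝ) (hρ : 0 < ρ)
    {d : ℕ} (g : Fin d → X → ℝ)
    (horth : ∀ i j, ∑ x, pX x * g i x * g j x = if i = j then 1 else 0)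
    (h : X → ℝ) (hmem : h ∈ Submodule.span ℝ (Set.range g))
    (hperp : ∀ u ∈ Submodule.span ℝ (Set.range g),
      ∑ x, pX x * (fs x - h x) * u x = 0) :
    (1 / 2) *
      ((∑ x, ∑ x',
          (pY1 * (pX x * (1 + ρ * fs x * gs1)) * (pX x' * (1 + ρ * fs x' * gs1))
            + pYm1 * (pX x * (1 + ρ * fs x * gsm1)) * (pX x' * (1 + ρ * fs x' * gsm1)))
          * (∑ i, g i x * g i x'))
        - ∑ x, ∑ x', pX x * pX x' * (∑ i, g i x * g i x'))
      = ρ ^ 2 / 2 * ∑ x, pX x * h x ^ 2 := by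
  classical
  obtain ⟨c, hc⟩ := (Submodule.mem_span_range_iff_exists_fun ℝ).mp hmem
  have hcx : ∀ x, h x = ∑ j, c j * g j x := by
    intro x
    rw [← hc]
    simp [Finset.sum_apply]
  -- ⟨h, g i⟩ = c i
  have h2 : ∀ i, ∑ x, pX x * h x * g i x = c i := by
    intro i
    calc ∑ x, pX x * h x * g i x
        = ∑ x, ∑ j, c j * (pX x * g j x * g i x) := by
          refine Finset.sum_congr rfl fun x _ => ?_
          rw [hcx x, Finset.mul_sum, Finset.sum_mul]
          exact Finset.sum_congr rfl fun j _ => by ring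
      _ = ∑ j, ∑ x, c j * (pX x * g j x * g i x) := Finset.sum_comm
      _ = ∑ j, c j * (if j = i then (1:ℝ) else 0) := by
          refine Finset.sum_congr rfl fun j _ => ?_
          rw [← Finset.mul_sum, horth j i]
      _ = c i := by simp
  -- ⟨fs, g i⟩ = c i
  have A2 : ∀ i, ∑ x, pX x * fs x * g i x = c i := by
    intro i
    have h1 := hperp (g i) (Submodule.subset_span ⟨i, rfl⟩)
    have h3 : ∑ x, (pX x * fs x * g i x - pX x * h x * g i x) = 0 := by
      rw [← h1]
      exact Finset.sum_congr rfl fun x _ => by ring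
    rw [Finset.sum_sub_distrib, h2 i, sub_eq_zero] at h3
    rw [h3]
  -- ‖h‖² = ∑ c i ²
  have B : ∑ x, pX x * h x ^ 2 = ∑ i, c i ^ 2 := by
    calc ∑ x, pX x * h x ^ 2
        = ∑ x, ∑ j, c j * (pX x * h x * g j x) := by
          refine Finset.sum_congr rfl fun x _ => ?_
          conv_lhs => rw [sq, hcx x]
          rw [Finset.mul_sum, Finset.mul_sum]
          exact Finset.sum_congr rfl fun j _ => by rw [← hcx x]; ring
      _ = ∑ j, c j * ∑ x, pX x * h x * g j x := by
          rw [Finset.sum_comm]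
          exact Finset.sum_congr rfl fun j _ => by rw [Finset.mul_sum]
      _ = ∑ j, c j ^ 2 := by
          refine Finset.sum_congr rfl fun j _ => ?_
          rw [h2 j, sq]
  set m : Fin d → ℝ := fun i => ∑ x, pX x * g i x with hm
  have key : ∀ (gs : ℝ) (i : Fin d),
      ∑ x, (pX x * (1 + ρ * fs x * gs)) * g i x = m i + ρ * gs * c i := by
    intro gs i
    have : ∀ x, (pX x * (1 + ρ * fs x * gs)) * g i x
        = pX x * g i x + (ρ * gs) * (pX x * fs x * g i x) := fun x => by ring
    simp_rw [this]
    rw [Finset.sum_add_distrib, ← Finset.mul_sum, A2 i]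
  have factor : ∀ (A : X → ℝ),
      ∑ x, ∑ x', (A x * A x') * (∑ i, g i x * g i x') = ∑ i, (∑ x, A x * g i x) ^ 2 := by
    intro A
    calc ∑ x, ∑ x', (A x * A x') * (∑ i, g i x * g i x')
        = ∑ x, ∑ x', ∑ i, (A x * g i x) * (A x' * g i x') := by
          refine Finset.sum_congr rfl fun x _ => Finset.sum_congr rfl fun x' _ => ?_
          rw [Finset.mul_sum]
          exact Finset.sum_congr rfl fun i _ => by ring
      _ = ∑ x, ∑ i, ∑ x', (A x * g i x) * (A x' * g i x') :=
          Finset.sum_congr rfl fun x _ => Finset.sum_comm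
      _ = ∑ i, ∑ x, ∑ x', (A x * g i x) * (A x' * g i x') := Finset.sum_comm
      _ = ∑ i, (∑ x, A x * g i x) ^ 2 := by
          refine Finset.sum_congr rfl fun i _ => ?_
          rw [sq, Finset.sum_mul_sum]
  set A1 : X → ℝ := fun x => pX x * (1 + ρ * fs x * gs1) with hA1
  set Am : X → ℝ := fun x => pX x * (1 + ρ * fs x * gsm1) with hAm
  have split : (∑ x, ∑ x',
        (pY1 * (pX x * (1 + ρ * fs x * gs1)) * (pX x' * (1 + ρ * fs x' * gs1))
          + pYm1 * (pX x * (1 + ρ * fs x * gsm1)) * (pX x' * (1 + ρ * fs x' * gsm1)))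
        * (∑ i, g i x * g i x'))
      = pY1 * (∑ x, ∑ x', (A1 x * A1 x') * (∑ i, g i x * g i x'))
        + pYm1 * (∑ x, ∑ x', (Am x * Am x') * (∑ i, g i x * g i x')) := by
    rw [Finset.mul_sum, Finset.mul_sum, ← Finset.sum_add_distrib]
    refine Finset.sum_congr rfl fun x _ => ?_
    rw [Finset.mul_sum, Finset.mul_sum, ← Finset.sum_add_distrib]
    refine Finset.sum_congr rfl fun x' _ => ?_
    simp only [hA1, hAm]
    ring
  rw [split, factor A1, factor Am, factor pX]
  simp only [hA1, hAm]
  have hk1 : ∀ i, ∑ x, (pX x * (1 + ρ * fs x * gs1)) * g i x = m i + ρ * gs1 * c i :=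
    key gs1
  have hkm : ∀ i, ∑ x, (pX x * (1 + ρ * fs x * gsm1)) * g i x = m i + ρ * gsm1 * c i :=
    key gsm1
  simp_rw [hk1, hkm, B]
  rw [Finset.mul_sum, Finset.mul_sum, ← Finset.sum_add_distrib, ← Finset.sum_sub_distrib,
    Finset.mul_sum, Finset.mul_sum]
  refine Finset.sum_congr rfl fun i _ => ?_
  linear_combination (1/2) * (m i) ^ 2 * hpY1 + ρ * m i * c i * hgm
    + ρ ^ 2 * (c i) ^ 2 / 2 * hgv
end

section
/- For a subspace G of the feature space with binary Y, the maximum of H(f) over f ∈ G is attained at f = Π_G f*, and equals H(G) = (ρ²/2)‖Π_G f*‖². -/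
open Finset

/-- H-score of a one-dimensional feature `f : X → ℝ` under the binary model
with prior `(pY1, pYm1)` on `Y ∈ {1, -1}`, conditionals
`P_{X|Y=y}(x) = pX x (1 + ρ fs x g*(y))`:
`H(f) = (1/2) E_Y[(E[f̃(X)|Y])²] / E[f(X)²]`. -/
noncomputable def Hscore1 {X : Type*} [Fintype X] (pX : X → ℝ)
    (pY1 pYm1 gs1 gsm1 ρ : ℝ) (fs : X → ℝ) (f : X → ℝ) : ℝ :=
  (1 / 2) *
    (pY1 * (∑ x, pX x * (1 + ρ * fs x * gs1) * (f x - ∑ x', pX x' * f x')) ^ 2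
      + pYm1 * (∑ x, pX x * (1 + ρ * fs x * gsm1) * (f x - ∑ x', pX x' * f x')) ^ 2)
    / (∑ x, pX x * f x ^ 2)

/-!
The conditional mean of the centred feature `f̃` given `Y = y` is `ρ g*(y) ⟨f*, f⟩`, so
`H(f) = (ρ²/2) ⟨f*, f⟩² / ‖f‖²`. For `f ∈ G` the correlation `⟨f*, f⟩` equals `⟨Π_G f*, f⟩`,
and Cauchy–Schwarz bounds `⟨Π_G f*, f⟩² / ‖f‖²` by `‖Π_G f*‖²`, with equality at `f = Π_G f*`.
-/

section WeightedCauchySchwarz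

variable {ι : Type*} (s : Finset ι)

lemma sq_sum_weighted_mul_le {w : ι → ℝ} (hw : ∀ i ∈ s, 0 ≤ w i) (u v : ι → ℝ) :
    (∑ i ∈ s, w i * u i * v i) ^ 2 ≤ (∑ i ∈ s, w i * u i ^ 2) * ∑ i ∈ s, w i * v i ^ 2 :=
  sum_sq_le_sum_mul_sum_of_sq_le_mul s (fun i hi => mul_nonneg (hw i hi) (sq_nonneg _))
    (fun i hi => mul_nonneg (hw i hi) (sq_nonneg _)) (fun _ _ => le_of_eq (by ring))

lemma sq_sum_weighted_mul_div_le {w : ι → ℝ} (hw : ∀ i ∈ s, 0 ≤ w i) (u v : ι → ℝ) :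
    (∑ i ∈ s, w i * u i * v i) ^ 2 / ∑ i ∈ s, w i * v i ^ 2 ≤ ∑ i ∈ s, w i * u i ^ 2 :=
  div_le_of_le_mul₀ (sum_nonneg fun i hi => mul_nonneg (hw i hi) (sq_nonneg _))
    (sum_nonneg fun i hi => mul_nonneg (hw i hi) (sq_nonneg _)) (sq_sum_weighted_mul_le s hw u v)

lemma sq_sum_weighted_mul_self_div (w u : ι → ℝ) :
    (∑ i ∈ s, w i * u i * u i) ^ 2 / ∑ i ∈ s, w i * u i ^ 2 = ∑ i ∈ s, w i * u i ^ 2 := by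
  simp_rw [mul_assoc, ← sq, sq (∑ i ∈ s, w i * u i ^ 2)]
  exact mul_self_div_self _

end WeightedCauchySchwarz

section HScore

variable {X : Type*} [Fintype X] {pX : X → ℝ} {fs : X → ℝ}

lemma sum_tilted_mul_centered (hpX1 : ∑ x, pX x = 1) (hfm : ∑ x, pX x * fs x = 0)
    (ρ g : ℝ) (f : X → ℝ) :
    ∑ x, pX x * (1 + ρ * fs x * g) * (f x - ∑ x', pX x' * f x')
      = ρ * g * ∑ x, pX x * fs x * f x := by
  have expand : ∀ x, pX x * (1 + ρ * fs x * g) * (f x - ∑ x', pX x' * f x')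
      = pX x * f x - (∑ x', pX x' * f x') * pX x
        + ρ * g * (pX x * fs x * f x) - ρ * g * (∑ x', pX x' * f x') * (pX x * fs x) := by
    intro x
    ring
  simp only [expand, sum_sub_distrib, sum_add_distrib, ← mul_sum, hpX1, hfm]
  ring

lemma Hscore1_eq (hpX1 : ∑ x, pX x = 1) (hfm : ∑ x, pX x * fs x = 0)
    {pY1 pYm1 gs1 gsm1 : ℝ} (hgv : pY1 * gs1 ^ 2 + pYm1 * gsm1 ^ 2 = 1) (ρ : ℝ) (f : X → ℝ) :
    Hscore1 pX pY1 pYm1 gs1 gsm1 ρ fs f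
      = ρ ^ 2 / 2 * ((∑ x, pX x * fs x * f x) ^ 2 / ∑ x, pX x * f x ^ 2) := by
  rw [Hscore1, sum_tilted_mul_centered hpX1 hfm, sum_tilted_mul_centered hpX1 hfm,
    div_eq_mul_inv, div_eq_mul_inv]
  linear_combination
    (ρ ^ 2 / 2 * (∑ x, pX x * fs x * f x) ^ 2 * (∑ x, pX x * f x ^ 2)⁻¹) * hgv

end HScore

lemma sum_mul_mul_eq_of_sum_sub_mul_eq_zero {ι : Type*} {s : Finset ι} {w u v f : ι → ℝ}
    (hperp : ∑ i ∈ s, w i * (u i - v i) * f i = 0) :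
    ∑ i ∈ s, w i * u i * f i = ∑ i ∈ s, w i * v i * f i := by
  rw [← sub_eq_zero, ← sum_sub_distrib, ← hperp]
  exact sum_congr rfl fun i _ => by ring

theorem stmt6_general {X : Type*} [Fintype X]
    (pX : X → ℝ) (hpX : ∀ x, 0 < pX x) (hpX1 : ∑ x, pX x = 1)
    (pY1 pYm1 : ℝ)
    (fs : X → ℝ) (hfm : ∑ x, pX x * fs x = 0)
    (gs1 gsm1 : ℝ)
    (hgv : pY1 * gs1 ^ 2 + pYm1 * gsm1 ^ 2 = 1)
    (ρ : ℝ)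
    (G : Submodule ℝ (X → ℝ))
    (h : X → ℝ) (hmem : h ∈ G)
    (hperp : ∀ u ∈ G, ∑ x, pX x * (fs x - h x) * u x = 0) :
    (∀ f ∈ G, Hscore1 pX pY1 pYm1 gs1 gsm1 ρ fs f
        ≤ ρ ^ 2 / 2 * ∑ x, pX x * h x ^ 2) ∧
    Hscore1 pX pY1 pYm1 gs1 gsm1 ρ fs h = ρ ^ 2 / 2 * ∑ x, pX x * h x ^ 2 := by
  have hcorr : ∀ f ∈ G, ∑ x, pX x * fs x * f x = ∑ x, pX x * h x * f x :=
    fun f hf => sum_mul_mul_eq_of_sum_sub_mul_eq_zero (hperp f hf)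
  refine ⟨fun f hf => ?_, ?_⟩
  · rw [Hscore1_eq hpX1 hfm hgv, hcorr f hf]
    gcongr
    exact sq_sum_weighted_mul_div_le univ (fun x _ => (hpX x).le) h f
  · rw [Hscore1_eq hpX1 hfm hgv, hcorr h hmem, sq_sum_weighted_mul_self_div]

/-- For a subspace `G` of the feature space (binary `Y`, modal decomposition
`P_{X,Y} = P_X P_Y (1 + ρ f* g*)`), the maximum of the H-score `H(f)` over
`f ∈ G` is attained at `f = Π_G f*` (the projection `h` of `f*` onto `G`), and
equals `H(G) = (ρ²/2)‖Π_G f*‖²`. -/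
theorem stmt6 {X : Type*} [Fintype X]
    (pX : X → ℝ) (hpX : ∀ x, 0 < pX x) (hpX1 : ∑ x, pX x = 1)
    (pY1 pYm1 : ℝ) (hpY : 0 ≤ pY1 ∧ 0 ≤ pYm1) (hpY1 : pY1 + pYm1 = 1)
    (fs : X → ℝ) (hfm : ∑ x, pX x * fs x = 0) (hfv : ∑ x, pX x * fs x ^ 2 = 1)
    (gs1 gsm1 : ℝ) (hgm : pY1 * gs1 + pYm1 * gsm1 = 0)
    (hgv : pY1 * gs1 ^ 2 + pYm1 * gsm1 ^ 2 = 1)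
    (ρ : ℝ) (hρ : 0 < ρ)
    (G : Submodule ℝ (X → ℝ))
    (h : X → ℝ) (hmem : h ∈ G)
    (hperp : ∀ u ∈ G, ∑ x, pX x * (fs x - h x) * u x = 0) :
    (∀ f ∈ G, Hscore1 pX pY1 pYm1 gs1 gsm1 ρ fs f
        ≤ ρ ^ 2 / 2 * ∑ x, pX x * h x ^ 2) ∧
    Hscore1 pX pY1 pYm1 gs1 gsm1 ρ fs h = ρ ^ 2 / 2 * ∑ x, pX x * h x ^ 2 :=
  stmt6_general pX hpX hpX1 pY1 pYm1 fs hfm gs1 gsm1 hgv ρ G h hmem hperp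
end

section
/- Let P_{X,Y} have modal decomposition P_{X,Y}(x,y) = P_X(x)P_Y(y)(1 + Σ_{i=1}^K σ_i f*_i(x) g*_i(y)) with orthonormal families {f*_i} and {g*_i}. Let k*(x,x') = Σ_i f*_i(x)f*_i(x') be the maximal correlation kernel. Then the kernelized discriminative model P^{(k*)}_{Y|X}(y|x) = P_Y(y)(1 + E[k̃*(X,x)|Y=y]) equals the true conditional distribution P_{Y|X}(y|x) for all x, y, where k̃* is the centered kernel. -/
/-! The modal functions `f*_i` have zero mean, so the maximal correlation kernel is already
centered, and by orthonormality it reproduces every linear combination of them: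
`E_{P_X}[(1 + ∑ c_i f*_i(X)) k*(X, x)] = ∑ c_i f*_i(x)`. Under `P_{X|Y=y}` the density with
respect to `P_X` is `1 + ∑ σ_i g*_i(y) f*_i`, so the conditional expectation of `k*(X, x)` is
`∑ σ_i g*_i(y) f*_i(x)`, which is exactly `P_{Y|X}(y|x) / P_Y(y) - 1`. -/

open Finset

section OrthonormalKernel

variable {X ι : Type*} [Fintype X] [Fintype ι] [DecidableEq ι] {p : X → ℝ} {f : ι → X → ℝ}

lemma sum_mul_one_add_sum_mul_of_orthonormal (hmean : ∀ i, ∑ x, p x * f i x = 0)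
    (horth : ∀ i j, ∑ x, p x * f i x * f j x = if i = j then 1 else 0) (c : ι → ℝ) (j : ι) :
    ∑ x, p x * (1 + ∑ i, c i * f i x) * f j x = c j := by
  have hexpand : ∀ x, p x * (1 + ∑ i, c i * f i x) * f j x
      = p x * f j x + ∑ i, c i * (p x * f i x * f j x) := fun x => by
    rw [mul_add, mul_one, add_mul, mul_sum, sum_mul]
    congr 1
    exact sum_congr rfl fun i _ => by ring
  simp_rw [hexpand, sum_add_distrib, hmean, zero_add]
  rw [sum_comm]
  simp_rw [← mul_sum, horth, mul_ite, mul_one, mul_zero, sum_ite_eq', mem_univ, if_true]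

lemma sum_mul_one_add_sum_mul_kernel_of_orthonormal (hmean : ∀ i, ∑ x, p x * f i x = 0)
    (horth : ∀ i j, ∑ x, p x * f i x * f j x = if i = j then 1 else 0) (c : ι → ℝ) (x : X) :
    ∑ x', p x' * (1 + ∑ i, c i * f i x') * ∑ j, f j x' * f j x = ∑ j, c j * f j x := by
  simp_rw [mul_sum, ← mul_assoc]
  rw [sum_comm]
  simp_rw [← sum_mul, sum_mul_one_add_sum_mul_of_orthonormal hmean horth]

end OrthonormalKernel

theorem stmt7_general {X Y : Type*} [Fintype X] [Fintype Y]
    (pX : X → ℝ) (hpX : ∀ x, 0 < pX x)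
    (pY : Y → ℝ) (hpY : ∀ y, 0 < pY y)
    {K : ℕ} (σ : Fin K → ℝ)
    (fs : Fin K → X → ℝ) (gs : Fin K → Y → ℝ)
    (hforth : ∀ i j, ∑ x, pX x * fs i x * fs j x = if i = j then 1 else 0)
    (hfmean : ∀ i, ∑ x, pX x * fs i x = 0)
    (P : X → Y → ℝ)
    (hP : ∀ x y, P x y = pX x * pY y * (1 + ∑ i, σ i * fs i x * gs i y))
    (ks : X → X → ℝ) (hks : ∀ x x', ks x x' = ∑ i, fs i x * fs i x')
    (kbar : X → ℝ) (hkbar : ∀ x, kbar x = ∑ x', pX x' * ks x' x)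
    (kt : X → X → ℝ)
    (hkt : ∀ x x', kt x x' = ks x x' - kbar x - kbar x'
      + ∑ x'', pX x'' * kbar x'') :
    ∀ x y, pY y * (1 + ∑ x', (P x' y / pY y) * kt x' x) = P x y / pX x := by
  have hkbar_zero : ∀ x, kbar x = 0 := fun x => by
    simpa [hkbar, hks] using
      sum_mul_one_add_sum_mul_kernel_of_orthonormal hfmean hforth 0 x
  have hkt_eq : ∀ x x', kt x x' = ks x x' := by simp [hkt, hkbar_zero]
  intro x y
  have hcond : ∀ x', P x' y / pY y = pX x' * (1 + ∑ i, σ i * gs i y * fs i x') := fun x' => by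
    rw [hP, mul_right_comm, mul_div_assoc, div_self (hpY y).ne', mul_one]
    simp_rw [mul_right_comm _ (fs _ x')]
  calc pY y * (1 + ∑ x', (P x' y / pY y) * kt x' x)
      = pY y * (1 + ∑ i, σ i * gs i y * fs i x) := by
        simp_rw [hcond, hkt_eq, hks,
          sum_mul_one_add_sum_mul_kernel_of_orthonormal hfmean hforth]
    _ = P x y / pX x := by
        rw [hP, mul_assoc, mul_div_cancel_left₀ _ (hpX x).ne']
        simp_rw [mul_right_comm _ (fs _ x)]

/-- Modal decomposition
`P_{X,Y}(x,y) = P_X(x)P_Y(y)(1 + ∑ i σ_i f*_i(x) g*_i(y))` with orthonormal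
zero-mean families `{f*_i}`, `{g*_i}`.  For the maximal correlation kernel
`k*(x,x') = ∑ i f*_i(x) f*_i(x')` with centered kernel `k̃*`, the kernelized
discriminative model `P^{(k*)}_{Y|X}(y|x) = P_Y(y)(1 + E[k̃*(X,x)|Y=y])`
equals the true conditional distribution `P_{Y|X}(y|x)` for all `x, y`. -/
theorem stmt7 {X Y : Type*} [Fintype X] [Fintype Y]
    (pX : X → ℝ) (hpX : ∀ x, 0 < pX x) (hpX1 : ∑ x, pX x = 1)
    (pY : Y → ℝ) (hpY : ∀ y, 0 < pY y) (hpY1 : ∑ y, pY y = 1)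
    {K : ℕ} (σ : Fin K → ℝ) (hσ : ∀ i, 0 < σ i)
    (fs : Fin K → X → ℝ) (gs : Fin K → Y → ℝ)
    (hforth : ∀ i j, ∑ x, pX x * fs i x * fs j x = if i = j then 1 else 0)
    (hgorth : ∀ i j, ∑ y, pY y * gs i y * gs j y = if i = j then 1 else 0)
    (hfmean : ∀ i, ∑ x, pX x * fs i x = 0)
    (hgmean : ∀ i, ∑ y, pY y * gs i y = 0)
    (P : X → Y → ℝ)
    (hP : ∀ x y, P x y = pX x * pY y * (1 + ∑ i, σ i * fs i x * gs i y))
    (ks : X → X → ℝ) (hks : ∀ x x', ks x x' = ∑ i, fs i x * fs i x')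
    (kbar : X → ℝ) (hkbar : ∀ x, kbar x = ∑ x', pX x' * ks x' x)
    (kt : X → X → ℝ)
    (hkt : ∀ x x', kt x x' = ks x x' - kbar x - kbar x'
      + ∑ x'', pX x'' * kbar x'') :
    ∀ x y, pY y * (1 + ∑ x', (P x' y / pY y) * kt x' x) = P x y / pX x :=
  stmt7_general pX hpX pY hpY σ fs gs hforth hfmean P hP ks hks kbar hkbar kt hkt
end

section
/- For any feature f: X → ℝ^d, any (w,b), and any λ > 0, the SVM loss satisfies L_SVM(f,w,b;λ) ≥ 1 − (1/(2λ))‖E[f(X)Y]‖², with the right-hand side attained at w = (1/λ)E[f(X)Y], b = −⟨w, E[f(X)]⟩ whenever λ ≥ M·‖E[f(X)Y]‖, where M = max_x ‖f(x) − E[f(X)]‖. -/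
open RealInnerProductSpace

/-- For any feature map `f`, any `(w, b)` and `λ > 0`, the SVM loss satisfies
`L_SVM(f,w,b;λ) ≥ 1 - (1/(2λ))‖E[f(X)Y]‖²`, and the bound is attained at
`w = (1/λ) E[f(X)Y]`, `b = -⟨w, E[f(X)]⟩` whenever `λ ≥ M ‖E[f(X)Y]‖`, where
`M` bounds `‖f(x) - E[f(X)]‖` on the support. -/
theorem stmt9 {Ω : Type*} [Fintype Ω] (p : Ω → ℝ)
    (hp : ∀ ω, 0 ≤ p ω) (hp1 : ∑ ω, p ω = 1)
    {d : ℕ} (f : Ω → EuclideanSpace ℝ (Fin d)) (Y : Ω → ℝ)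
    (hY : ∀ ω, Y ω = 1 ∨ Y ω = -1) (hEY : ∑ ω, p ω * Y ω = 0)
    (lam : ℝ) (hlam : 0 < lam)
    (μ mf : EuclideanSpace ℝ (Fin d))
    (hμ : μ = ∑ ω, (p ω * Y ω) • f ω)
    (hmf : mf = ∑ ω, p ω • f ω)
    (M : ℝ) (hM : ∀ ω, 0 < p ω → ‖f ω - mf‖ ≤ M) :
    (∀ (w : EuclideanSpace ℝ (Fin d)) (b : ℝ),
      1 - 1 / (2 * lam) * ‖μ‖ ^ 2 ≤
        (∑ ω, p ω * max (1 - Y ω * (⟪w, f ω⟫ + b)) 0) + lam / 2 * ‖w‖ ^ 2) ∧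
    (lam ≥ M * ‖μ‖ →
      (∑ ω, p ω * max (1 - Y ω * (⟪(1 / lam) • μ, f ω⟫
            + (- ⟪(1 / lam) • μ, mf⟫))) 0)
          + lam / 2 * ‖(1 / lam) • μ‖ ^ 2
        = 1 - 1 / (2 * lam) * ‖μ‖ ^ 2) := by
  have hsum : ∀ (w : EuclideanSpace ℝ (Fin d)) (b : ℝ),
      ∑ ω, p ω * (1 - Y ω * (⟪w, f ω⟫ + b)) = 1 - ⟪w, μ⟫ := by
    intro w b
    have h1 : ⟪w, μ⟫ = ∑ ω, (p ω * Y ω) * ⟪w, f ω⟫ := by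
      rw [hμ, inner_sum]
      exact Finset.sum_congr rfl fun ω _ => real_inner_smul_right _ _ _
    have h2 : ∀ ω ∈ Finset.univ, p ω * (1 - Y ω * (⟪w, f ω⟫ + b))
        = p ω - (p ω * Y ω) * ⟪w, f ω⟫ - (p ω * Y ω) * b := fun ω _ => by ring
    rw [Finset.sum_congr rfl h2, Finset.sum_sub_distrib, Finset.sum_sub_distrib,
      ← Finset.sum_mul, hEY, hp1, h1]
    ring
  constructor
  · intro w b
    have hle : ∑ ω, p ω * (1 - Y ω * (⟪w, f ω⟫ + b)) ≤
        ∑ ω, p ω * max (1 - Y ω * (⟪w, f ω⟫ + b)) 0 :=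
      Finset.sum_le_sum fun ω _ => mul_le_mul_of_nonneg_left (le_max_left _ _) (hp ω)
    have hcs : ⟪w, μ⟫ ≤ ‖w‖ * ‖μ‖ := real_inner_le_norm w μ
    have h := hsum w b
    have h5 : ⟪w, μ⟫ - lam / 2 * ‖w‖ ^ 2 ≤ ‖μ‖ ^ 2 / (2 * lam) := by
      rw [le_div_iff₀ (by linarith : (0:ℝ) < 2 * lam)]
      nlinarith [sq_nonneg (lam * ‖w‖ - ‖μ‖), hcs, hlam]
    have heq : 1 / (2 * lam) * ‖μ‖ ^ 2 = ‖μ‖ ^ 2 / (2 * lam) := by ring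
    rw [heq]
    linarith
  · intro hlam2
    set w : EuclideanSpace ℝ (Fin d) := (1 / lam) • μ with hw
    have hwn : ‖w‖ = ‖μ‖ / lam := by
      rw [hw, norm_smul, Real.norm_eq_abs,
        abs_of_pos (by positivity : (0:ℝ) < 1 / lam)]
      field_simp
    have hwl : lam * ‖w‖ = ‖μ‖ := by rw [hwn]; field_simp
    have hwμ : ⟪w, μ⟫ = ‖μ‖ ^ 2 / lam := by
      rw [hw, real_inner_smul_left, real_inner_self_eq_norm_sq]
      ring
    have hmax : ∀ ω ∈ Finset.univ, p ω * max (1 - Y ω * (⟪w, f ω⟫ + -⟪w, mf⟫)) 0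
        = p ω * (1 - Y ω * (⟪w, f ω⟫ + -⟪w, mf⟫)) := by
      intro ω _
      rcases eq_or_lt_of_le (hp ω) with h | h
      · rw [← h]; ring
      · congr 1
        apply max_eq_left
        have hg : ⟪w, f ω⟫ + -⟪w, mf⟫ = ⟪w, f ω - mf⟫ := by
          rw [inner_sub_right]; ring
        rw [hg]
        have habs : |⟪w, f ω - mf⟫| ≤ ‖w‖ * ‖f ω - mf‖ := abs_real_inner_le_norm _ _
        have hMω := hM ω h
        have hwnn : (0:ℝ) ≤ ‖w‖ := norm_nonneg _
        have h2 : ‖w‖ * ‖f ω - mf‖ ≤ ‖w‖ * M := mul_le_mul_of_nonneg_left hMω hwnn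
        have h3 : lam * (‖w‖ * M) = M * ‖μ‖ := by rw [← hwl]; ring
        have h4 : ‖w‖ * M ≤ 1 := by nlinarith [h3, hlam2, hlam]
        rcases hY ω with hy | hy <;> rw [hy] <;>
          cases' abs_le.mp habs with hl hr <;> nlinarith
    rw [Finset.sum_congr rfl hmax, hsum w (-⟪w, mf⟫), hwμ, hwn]
    field_simp
    ring
end

section
/- For every feature f, λ > 0, the optimal SVM loss satisfies L*_SVM(f;λ) ≤ 1 − (1/(2λ))‖E[f(X)Y]‖² + (λ_T/λ − 1)⁺, where λ_T = M‖E[f(X)Y]‖ with M = max_x ‖f(x) − E[f(X)]‖. -/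
/-!
Take the mean-difference classifier `w = λ⁻¹ E[f(X)Y]`, centred by `b = -⟪w, m⟫` where `m` is the
point around which `f` is bounded by `M`. Its margins `Y⟪w, f(X) - m⟫` average to `‖E[f(X)Y]‖² / λ`
because `E[Y] = 0`, and by Cauchy–Schwarz they never exceed `λ_T / λ`. On such margins the hinge
`(1 - z)⁺` is at most `1 - z + (λ_T / λ - 1)⁺`, so the expected hinge loss is at most
`1 - ‖E[f(X)Y]‖² / λ + (λ_T / λ - 1)⁺`, and the penalty `λ/2 ‖w‖²` adds back half of the middle term.
-/

open RealInnerProductSpace Finset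

lemma max_one_sub_le_of_le {z T : ℝ} (h : z ≤ T) :
    max (1 - z) 0 ≤ 1 - z + max (T - 1) 0 :=
  max_le (by linarith [le_max_right (T - 1) 0]) (by linarith [le_max_left (T - 1) 0])

lemma sum_mul_max_one_sub_le {ι : Type*} (s : Finset ι) (p z : ι → ℝ) (T : ℝ)
    (hp : ∀ i ∈ s, 0 ≤ p i) (hp1 : ∑ i ∈ s, p i = 1) (hz : ∀ i ∈ s, 0 < p i → z i ≤ T) :
    ∑ i ∈ s, p i * max (1 - z i) 0 ≤ 1 - ∑ i ∈ s, p i * z i + max (T - 1) 0 := calc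
  ∑ i ∈ s, p i * max (1 - z i) 0 ≤ ∑ i ∈ s, p i * (1 - z i + max (T - 1) 0) := by
    refine sum_le_sum fun i hi => ?_
    rcases (hp i hi).eq_or_lt with h0 | hpos
    · simp [← h0]
    · exact mul_le_mul_of_nonneg_left (max_one_sub_le_of_le (hz i hi hpos)) hpos.le
  _ = 1 - ∑ i ∈ s, p i * z i + max (T - 1) 0 := by
    simp only [mul_add, mul_sub, mul_one, sum_add_distrib, sum_sub_distrib, ← sum_mul, hp1]
    ring

lemma mul_inner_le_norm_mul_norm {E : Type*} [NormedAddCommGroup E] [InnerProductSpace ℝ E]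
    {y : ℝ} (hy : |y| ≤ 1) (w x : E) : y * ⟪w, x⟫ ≤ ‖w‖ * ‖x‖ := calc
  y * ⟪w, x⟫ ≤ |y| * |⟪w, x⟫| := by rw [← abs_mul]; exact le_abs_self _
  _ ≤ 1 * (‖w‖ * ‖x‖) :=
    mul_le_mul hy (abs_real_inner_le_norm w x) (abs_nonneg _) zero_le_one
  _ = ‖w‖ * ‖x‖ := one_mul _

lemma sum_mul_inner_sub_of_sum_eq_zero {ι E : Type*} [NormedAddCommGroup E]
    [InnerProductSpace ℝ E] (s : Finset ι) (c : ι → ℝ) (w m : E) (x : ι → E)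
    (hc : ∑ i ∈ s, c i = 0) :
    ∑ i ∈ s, c i * ⟪w, x i - m⟫ = ⟪w, ∑ i ∈ s, c i • x i⟫ := by
  simp only [inner_sum, real_inner_smul_right, inner_sub_right, mul_sub, sum_sub_distrib,
    ← sum_mul, hc, zero_mul, sub_zero]

theorem stmt11_general {Ω : Type*} [Fintype Ω] (p : Ω → ℝ)
    (hp : ∀ ω, 0 ≤ p ω) (hp1 : ∑ ω, p ω = 1)
    {d : ℕ} (f : Ω → EuclideanSpace ℝ (Fin d)) (Y : Ω → ℝ)
    (hY : ∀ ω, Y ω = 1 ∨ Y ω = -1) (hEY : ∑ ω, p ω * Y ω = 0)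
    (lam : ℝ) (hlam : 0 < lam)
    (μ mf : EuclideanSpace ℝ (Fin d))
    (hμ : μ = ∑ ω, (p ω * Y ω) • f ω)
    (M : ℝ) (hM : ∀ ω, 0 < p ω → ‖f ω - mf‖ ≤ M) :
    ∃ (w : EuclideanSpace ℝ (Fin d)) (b : ℝ),
      (∑ ω, p ω * max (1 - Y ω * (⟪w, f ω⟫ + b)) 0) + lam / 2 * ‖w‖ ^ 2
        ≤ 1 - 1 / (2 * lam) * ‖μ‖ ^ 2 + max (M * ‖μ‖ / lam - 1) 0 := by
  set w := lam⁻¹ • μ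
  refine ⟨w, -⟪w, mf⟫, ?_⟩
  have hcentre : ∀ ω, ⟪w, f ω⟫ + -⟪w, mf⟫ = ⟪w, f ω - mf⟫ := fun ω => by
    rw [inner_sub_right, sub_eq_add_neg]
  have hw : ‖w‖ = ‖μ‖ / lam := by
    rw [norm_smul, Real.norm_eq_abs, abs_inv, abs_of_pos hlam, inv_mul_eq_div]
  have hmargin : ∀ ω, 0 < p ω → Y ω * ⟪w, f ω - mf⟫ ≤ M * ‖μ‖ / lam := fun ω hω => calc
    Y ω * ⟪w, f ω - mf⟫ ≤ ‖w‖ * ‖f ω - mf‖ :=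
      mul_inner_le_norm_mul_norm (by rcases hY ω with h | h <;> simp [h]) _ _
    _ ≤ ‖μ‖ / lam * M := by rw [hw]; gcongr; exact hM ω hω
    _ = M * ‖μ‖ / lam := by ring
  have hmean : ∑ ω, p ω * (Y ω * ⟪w, f ω - mf⟫) = ‖μ‖ ^ 2 / lam := by
    simp_rw [← mul_assoc]
    rw [sum_mul_inner_sub_of_sum_eq_zero _ _ _ _ _ hEY, ← hμ, real_inner_smul_left,
      real_inner_self_eq_norm_sq, inv_mul_eq_div]
  have hloss := sum_mul_max_one_sub_le univ p _ _ (fun ω _ => hp ω) hp1 (fun ω _ => hmargin ω)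
  rw [hmean] at hloss
  simp only [hcentre, hw]
  calc _ ≤ 1 - ‖μ‖ ^ 2 / lam + max (M * ‖μ‖ / lam - 1) 0 + lam / 2 * (‖μ‖ / lam) ^ 2 := by
        gcongr
    _ = _ := by field_simp; ring

/-- For every feature `f` and `λ > 0`, the optimal SVM loss satisfies
`L*_SVM(f;λ) ≤ 1 - (1/(2λ))‖E[f(X)Y]‖² + (λ_T/λ - 1)⁺` where
`λ_T = M ‖E[f(X)Y]‖` and `M` bounds `‖f(x) - E[f(X)]‖` on the support;
i.e., some `(w,b)` achieves at most this loss. -/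
theorem stmt11 {Ω : Type*} [Fintype Ω] (p : Ω → ℝ)
    (hp : ∀ ω, 0 ≤ p ω) (hp1 : ∑ ω, p ω = 1)
    {d : ℕ} (f : Ω → EuclideanSpace ℝ (Fin d)) (Y : Ω → ℝ)
    (hY : ∀ ω, Y ω = 1 ∨ Y ω = -1) (hEY : ∑ ω, p ω * Y ω = 0)
    (lam : ℝ) (hlam : 0 < lam)
    (μ mf : EuclideanSpace ℝ (Fin d))
    (hμ : μ = ∑ ω, (p ω * Y ω) • f ω)
    (hmf : mf = ∑ ω, p ω • f ω)
    (M : ℝ) (hM : ∀ ω, 0 < p ω → ‖f ω - mf‖ ≤ M) :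
    ∃ (w : EuclideanSpace ℝ (Fin d)) (b : ℝ),
      (∑ ω, p ω * max (1 - Y ω * (⟪w, f ω⟫ + b)) 0) + lam / 2 * ‖w‖ ^ 2
        ≤ 1 - 1 / (2 * lam) * ‖μ‖ ^ 2 + max (M * ‖μ‖ / lam - 1) 0 :=
  stmt11_general p hp hp1 f Y hY hEY lam hlam μ mf hμ M hM
end

section
/- Under the balanced binary setting, for any kernel k, the KDM decision ŷ^{(k)}(x) = argmax_{y∈{−1,1}} P^{(k)}_{Y|X}(y|x) equals sign(E[k̃(X,x)Y]) = sign([τ(f*)](x)), where τ is the operator of the centered kernel k̃; hence if f* is an eigenfunction of τ with positive eigenvalue, the KDM decision coincides with the MAP decision sign(f*(x)). -/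
/-- Balanced binary setting `P_{X,Y}(x,y) = P_X(x)(1/2)(1 + ρ y f*(x))`.
For any kernel `k` with centered kernel `k̃` and operator `τ`, the KDM
decision `argmax_{y ∈ {-1,1}} P^{(k)}_{Y|X}(y|x)` equals
`sign(E[k̃(X,x)Y]) = sign([τ f*](x))`; hence if `f*` is an eigenfunction of
`τ` with positive eigenvalue, the KDM decision coincides with the MAP decision
`sign(f*(x))`. -/
theorem stmt16 {X : Type*} [Fintype X]
    (pX : X → ℝ) (hpX : ∀ x, 0 ≤ pX x) (hpX1 : ∑ x, pX x = 1)
    (fs : X → ℝ) (hfm : ∑ x, pX x * fs x = 0) (hfv : ∑ x, pX x * fs x ^ 2 = 1)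
    (ρ : ℝ) (hρ : 0 < ρ)
    (k : X → X → ℝ) (hsymm : ∀ x x', k x x' = k x' x)
    (kbar : X → ℝ) (hkbar : ∀ x, kbar x = ∑ x', pX x' * k x' x)
    (kt : X → X → ℝ)
    (hkt : ∀ x x', kt x x' = k x x' - kbar x - kbar x'
      + ∑ x'', pX x'' * kbar x'')
    (EkY : X → ℝ)
    (hEkY : ∀ x, EkY x =
      ∑ x', pX x' * ((1 / 2) * (1 + ρ * 1 * fs x') * (kt x' x * 1)
        + (1 / 2) * (1 + ρ * (-1) * fs x') * (kt x' x * (-1))))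
    (T : X → ℝ) (hT : ∀ x, T x = ∑ x', pX x' * kt x' x * fs x')
    (KDM : ℝ → X → ℝ)
    (hKDM : ∀ y x, KDM y x =
      (1 / 2) * (1 + ∑ x', pX x' * (1 + ρ * y * fs x') * kt x' x)) :
    (∀ x, EkY x ≠ 0 → ∀ y : ℝ, (y = 1 ∨ y = -1) → y ≠ Real.sign (EkY x) →
      KDM y x < KDM (Real.sign (EkY x)) x) ∧
    (∀ x, Real.sign (EkY x) = Real.sign (T x)) ∧
    (∀ c : ℝ, 0 < c → (∀ x, T x = c * fs x) →
      ∀ x, fs x ≠ 0 → Real.sign (EkY x) = Real.sign (fs x)) := by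
  have hE : ∀ x, EkY x = ρ * T x := by
    intro x
    rw [hEkY, hT, Finset.mul_sum]
    refine Finset.sum_congr rfl fun x' _ => by ring
  have hK : ∀ y x, KDM y x
      = (1 / 2) * (1 + ∑ x', pX x' * kt x' x) + ρ * y * T x / 2 := by
    intro y x
    rw [hKDM, hT, Finset.mul_sum]
    have : (∑ x', pX x' * (1 + ρ * y * fs x') * kt x' x)
        = (∑ x', pX x' * kt x' x) + ∑ x', ρ * y * (pX x' * kt x' x * fs x') := by
      rw [← Finset.sum_add_distrib]
      exact Finset.sum_congr rfl fun x' _ => by ring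
    rw [this]
    ring
  have hsign : ∀ x, Real.sign (EkY x) = Real.sign (T x) := by
    intro x
    rcases lt_trichotomy (T x) 0 with h | h | h
    · rw [Real.sign_of_neg h, Real.sign_of_neg (by rw [hE]; exact mul_neg_of_pos_of_neg hρ h)]
    · rw [h, Real.sign_zero, hE, h, mul_zero, Real.sign_zero]
    · rw [Real.sign_of_pos h, Real.sign_of_pos (by rw [hE]; exact mul_pos hρ h)]
  refine ⟨?_, hsign, ?_⟩
  · intro x hx y hy hne
    have hT0 : T x ≠ 0 := by
      intro h
      exact hx (by rw [hE, h, mul_zero])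
    rw [hsign]
    rw [hsign] at hne
    rcases lt_or_gt_of_ne hT0 with h | h
    · rw [Real.sign_of_neg h] at hne ⊢
      have hy1 : y = 1 := by rcases hy with h' | h' <;> [exact h'; exact absurd h' hne]
      subst hy1
      rw [hK, hK]
      have : ρ * (-1) * T x / 2 - ρ * 1 * T x / 2 = ρ * (-T x) := by ring
      nlinarith [mul_pos hρ (neg_pos.mpr h)]
    · rw [Real.sign_of_pos h] at hne ⊢
      have hy1 : y = -1 := by rcases hy with h' | h' <;> [exact absurd h' hne; exact h']
      subst hy1
      rw [hK, hK]
      nlinarith [mul_pos hρ h]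
  · intro c hc hTf x hfx
    rw [hsign, hTf]
    rcases lt_or_gt_of_ne hfx with h | h
    · rw [Real.sign_of_neg h, Real.sign_of_neg (mul_neg_of_pos_of_neg hc h)]
    · rw [Real.sign_of_pos h, Real.sign_of_pos (mul_pos hc h)]
end

section
/- For a subspace G of zero-mean features under the balanced binary modal decomposition, the kernel SVM decision on the projection kernel k_G satisfies ŷ(x) = sign([Π_G f*](x)) (where nonzero), and the corresponding SVM loss equals 1 − (ρ²/(2λ))‖Π_G f*‖² for λ ≥ λ_T. -/
/-- Balanced binary modal decomposition
`P_{X,Y}(x,y) = P_X(x)(1/2)(1 + ρ y f*(x))`.  For a subspace `G` spanned by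
an orthonormal family of zero-mean functions `g i`, the kernel SVM on the
projection kernel `k_G` (i.e. SVM on the feature map `x ↦ (g i x)_i`) decides
`ŷ(x) = sign([Π_G f*](x))` (where `h = Π_G f*`), and for `λ ≥ λ_T` the
optimal SVM loss equals `1 - (ρ²/(2λ))‖Π_G f*‖²`. -/
theorem stmt17 {X : Type*} [Fintype X]
    (pX : X → ℝ) (hpX : ∀ x, 0 < pX x) (hpX1 : ∑ x, pX x = 1)
    (fs : X → ℝ) (hfm : ∑ x, pX x * fs x = 0) (hfv : ∑ x, pX x * fs x ^ 2 = 1)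
    (ρ : ℝ) (hρ : 0 < ρ) (hvalid : ∀ x, ρ * |fs x| ≤ 1)
    {d : ℕ} (g : Fin d → X → ℝ)
    (hgmean : ∀ i, ∑ x, pX x * g i x = 0)
    (horth : ∀ i j, ∑ x, pX x * g i x * g j x = if i = j then 1 else 0)
    (h : X → ℝ) (hmem : h ∈ Submodule.span ℝ (Set.range g))
    (hperp : ∀ u ∈ Submodule.span ℝ (Set.range g),
      ∑ x, pX x * (fs x - h x) * u x = 0)
    (μ : Fin d → ℝ)
    (hμ : ∀ i, μ i = ∑ x, pX x * ((1 / 2) * (1 + ρ * fs x) * (g i x * 1)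
      + (1 / 2) * (1 + ρ * (-1) * fs x) * (g i x * (-1))))
    (M : ℝ) (hM : ∀ x, 0 < pX x → Real.sqrt (∑ i, g i x ^ 2) ≤ M)
    (lam : ℝ) (hlam : 0 < lam)
    (hlamT : M * Real.sqrt (∑ i, μ i ^ 2) ≤ lam) :
    (∀ x, Real.sign (∑ i, μ i * g i x) = Real.sign (h x)) ∧
    sInf {r : ℝ | ∃ (w : Fin d → ℝ) (b : ℝ), r =
        (∑ x, ((1 / 2) * pX x * (1 + ρ * fs x)
            * max (1 - (1 : ℝ) * ((∑ i, w i * g i x) + b)) 0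
          + (1 / 2) * pX x * (1 + ρ * (-1) * fs x)
            * max (1 - (-1 : ℝ) * ((∑ i, w i * g i x) + b)) 0))
        + lam / 2 * ∑ i, w i ^ 2}
      = 1 - ρ ^ 2 / (2 * lam) * ∑ x, pX x * h x ^ 2 := by
  obtain ⟨c, hc⟩ := (Submodule.mem_span_range_iff_exists_fun ℝ).mp hmem
  have hhx : ∀ x, h x = ∑ i, c i * g i x := by
    intro x
    rw [← hc]
    simp [Finset.sum_apply]
  -- ⟨h, g i⟩ = c i
  have hhg : ∀ i, ∑ x, pX x * h x * g i x = c i := by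
    intro i
    calc ∑ x, pX x * h x * g i x
        = ∑ x, ∑ j, c j * (pX x * g j x * g i x) := by
          refine Finset.sum_congr rfl fun x _ => ?_
          rw [hhx x, Finset.mul_sum, Finset.sum_mul]
          refine Finset.sum_congr rfl fun j _ => by ring
      _ = ∑ j, c j * ∑ x, pX x * g j x * g i x := by
          rw [Finset.sum_comm]
          exact Finset.sum_congr rfl fun j _ => by rw [Finset.mul_sum]
      _ = c i := by
          simp_rw [horth]
          simp
  -- ⟨fs, g i⟩ = c i
  have hfsg : ∀ i, ∑ x, pX x * fs x * g i x = c i := by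
    intro i
    have h1 := hperp (g i) (Submodule.subset_span ⟨i, rfl⟩)
    have h2 : ∑ x, pX x * fs x * g i x
        = (∑ x, pX x * (fs x - h x) * g i x) + ∑ x, pX x * h x * g i x := by
      rw [← Finset.sum_add_distrib]
      exact Finset.sum_congr rfl fun x _ => by ring
    rw [h2, h1, hhg i, zero_add]
  have hμc : ∀ i, μ i = ρ * c i := by
    intro i
    rw [hμ i, ← hfsg i, Finset.mul_sum]
    exact Finset.sum_congr rfl fun x _ => by ring
  have hμg : ∀ x, ∑ i, μ i * g i x = ρ * h x := by
    intro x
    rw [hhx x, Finset.mul_sum]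
    exact Finset.sum_congr rfl fun i _ => by rw [hμc i]; ring
  constructor
  · intro x
    rw [hμg x]
    rcases lt_trichotomy (h x) 0 with hx | hx | hx
    · rw [Real.sign_of_neg hx, Real.sign_of_neg (by nlinarith)]
    · rw [hx, mul_zero]
    · rw [Real.sign_of_pos hx, Real.sign_of_pos (by nlinarith)]
  -- norms
  have hnorm : ∑ x, pX x * h x ^ 2 = ∑ i, c i ^ 2 := by
    calc ∑ x, pX x * h x ^ 2 = ∑ x, ∑ i, c i * (pX x * h x * g i x) := by
          refine Finset.sum_congr rfl fun x _ => ?_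
          have e0 : pX x * h x ^ 2 = pX x * h x * ∑ i, c i * g i x := by
            rw [← hhx x]; ring
          rw [e0, Finset.mul_sum]
          refine Finset.sum_congr rfl fun i _ => by ring
      _ = ∑ i, c i * ∑ x, pX x * h x * g i x := by
          rw [Finset.sum_comm]
          exact Finset.sum_congr rfl fun i _ => by rw [Finset.mul_sum]
      _ = ∑ i, c i ^ 2 := by
          refine Finset.sum_congr rfl fun i _ => by rw [hhg i, sq]
  have hμsq : ∑ i, μ i ^ 2 = ρ ^ 2 * ∑ i, c i ^ 2 := by
    rw [Finset.mul_sum]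
    exact Finset.sum_congr rfl fun i _ => by rw [hμc i]; ring
  set v : ℝ := 1 - ρ ^ 2 / (2 * lam) * ∑ x, pX x * h x ^ 2 with hv
  have hvμ : v = 1 - (∑ i, μ i ^ 2) / (2 * lam) := by
    rw [hv, hnorm, hμsq]; ring
  -- linear part of the objective
  have hlin : ∀ (w : Fin d → ℝ) (b : ℝ),
      ∑ x, ((1 / 2) * pX x * (1 + ρ * fs x)
            * (1 - (1 : ℝ) * ((∑ i, w i * g i x) + b))
          + (1 / 2) * pX x * (1 + ρ * (-1) * fs x)
            * (1 - (-1 : ℝ) * ((∑ i, w i * g i x) + b)))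
        = 1 - ∑ i, μ i * w i := by
    intro w b
    have key : ∀ x, (1 / 2) * pX x * (1 + ρ * fs x)
            * (1 - (1 : ℝ) * ((∑ i, w i * g i x) + b))
          + (1 / 2) * pX x * (1 + ρ * (-1) * fs x)
            * (1 - (-1 : ℝ) * ((∑ i, w i * g i x) + b))
        = pX x - (∑ i, w i * (ρ * (pX x * fs x * g i x))) - b * ρ * (pX x * fs x) := by
      intro x
      rw [show (∑ i, w i * (ρ * (pX x * fs x * g i x)))
          = ρ * (pX x * fs x) * ∑ i, w i * g i x by
        rw [Finset.mul_sum]; exact Finset.sum_congr rfl fun i _ => by ring]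
      ring
    simp_rw [key]
    rw [Finset.sum_sub_distrib, Finset.sum_sub_distrib, hpX1, Finset.sum_comm,
      ← Finset.mul_sum]
    have e1 : ∀ i, ∑ x, w i * (ρ * (pX x * fs x * g i x)) = μ i * w i := by
      intro i
      rw [show ∑ x, w i * (ρ * (pX x * fs x * g i x))
          = w i * ρ * ∑ x, pX x * fs x * g i x by
        rw [Finset.mul_sum]; exact Finset.sum_congr rfl fun x _ => by ring,
        hfsg i, hμc i]
      ring
    simp_rw [e1]
    rw [show ∑ x, pX x * fs x = (0:ℝ) from hfm]
    ring
  -- lower bound for the linear objective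
  have hquad : ∀ w : Fin d → ℝ, v ≤ 1 - (∑ i, μ i * w i) + lam / 2 * ∑ i, w i ^ 2 := by
    intro w
    rw [hvμ]
    have : (0:ℝ) ≤ ∑ i, (lam / 2 * (w i - μ i / lam) ^ 2) :=
      Finset.sum_nonneg fun i _ => mul_nonneg (by linarith) (sq_nonneg _)
    have e : ∑ i, (lam / 2 * (w i - μ i / lam) ^ 2)
        = ∑ i, (lam / 2 * w i ^ 2 - μ i * w i + μ i ^ 2 / (2 * lam)) := by
      refine Finset.sum_congr rfl fun i _ => ?_
      field_simp
      ring
    rw [e, Finset.sum_add_distrib, Finset.sum_sub_distrib, ← Finset.mul_sum,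
      ← Finset.sum_div] at this
    linarith
  have hSlb : ∀ r ∈ {r : ℝ | ∃ (w : Fin d → ℝ) (b : ℝ), r =
        (∑ x, ((1 / 2) * pX x * (1 + ρ * fs x)
            * max (1 - (1 : ℝ) * ((∑ i, w i * g i x) + b)) 0
          + (1 / 2) * pX x * (1 + ρ * (-1) * fs x)
            * max (1 - (-1 : ℝ) * ((∑ i, w i * g i x) + b)) 0))
        + lam / 2 * ∑ i, w i ^ 2}, v ≤ r := by
    rintro r ⟨w, b, rfl⟩
    have hge : ∑ x, ((1 / 2) * pX x * (1 + ρ * fs x)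
            * max (1 - (1 : ℝ) * ((∑ i, w i * g i x) + b)) 0
          + (1 / 2) * pX x * (1 + ρ * (-1) * fs x)
            * max (1 - (-1 : ℝ) * ((∑ i, w i * g i x) + b)) 0)
        ≥ ∑ x, ((1 / 2) * pX x * (1 + ρ * fs x)
            * (1 - (1 : ℝ) * ((∑ i, w i * g i x) + b))
          + (1 / 2) * pX x * (1 + ρ * (-1) * fs x)
            * (1 - (-1 : ℝ) * ((∑ i, w i * g i x) + b))) := by
      refine Finset.sum_le_sum fun x _ => ?_
      have hlo : -1 ≤ ρ * fs x := by
        nlinarith [mul_le_mul_of_nonneg_left (neg_abs_le (fs x)) hρ.le, hvalid x]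
      have hup : ρ * fs x ≤ 1 := by
        nlinarith [mul_le_mul_of_nonneg_left (le_abs_self (fs x)) hρ.le, hvalid x]
      have h1 : (0:ℝ) ≤ (1 / 2) * pX x * (1 + ρ * fs x) :=
        mul_nonneg (mul_nonneg (by norm_num) (hpX x).le) (by linarith)
      have h2 : (0:ℝ) ≤ (1 / 2) * pX x * (1 + ρ * (-1) * fs x) :=
        mul_nonneg (mul_nonneg (by norm_num) (hpX x).le) (by nlinarith)
      have m1 := le_max_left (1 - (1 : ℝ) * ((∑ i, w i * g i x) + b)) 0
      have m2 := le_max_left (1 - (-1 : ℝ) * ((∑ i, w i * g i x) + b)) 0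
      have := mul_le_mul_of_nonneg_left m1 h1
      have := mul_le_mul_of_nonneg_left m2 h2
      linarith
    have := hquad w
    rw [← hlin w b] at this
    linarith
  -- the infimum is attained at w = μ/lam, b = 0
  have hne : Nonempty X := by
    by_contra hempty
    rw [not_nonempty_iff] at hempty
    rw [Finset.sum_eq_zero (fun x _ => (hempty.false x).elim)] at hpX1
    norm_num at hpX1
  obtain ⟨x0⟩ := hne
  have hM0 : 0 ≤ M := le_trans (Real.sqrt_nonneg _) (hM x0 (hpX x0))
  have hsmall : ∀ x, |∑ i, μ i / lam * g i x| ≤ 1 := by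
    intro x
    have hcs : (∑ i, μ i * g i x) ^ 2 ≤ (∑ i, μ i ^ 2) * ∑ i, g i x ^ 2 :=
      Finset.sum_mul_sq_le_sq_mul_sq Finset.univ μ (fun i => g i x)
    have habs : |∑ i, μ i * g i x|
        ≤ Real.sqrt (∑ i, μ i ^ 2) * Real.sqrt (∑ i, g i x ^ 2) := by
      rw [← Real.sqrt_sq_eq_abs, ← Real.sqrt_mul (Finset.sum_nonneg fun i _ => sq_nonneg _)]
      exact Real.sqrt_le_sqrt hcs
    have hb : Real.sqrt (∑ i, μ i ^ 2) * Real.sqrt (∑ i, g i x ^ 2)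
        ≤ Real.sqrt (∑ i, μ i ^ 2) * M :=
      mul_le_mul_of_nonneg_left (hM x (hpX x)) (Real.sqrt_nonneg _)
    have hsum : |∑ i, μ i * g i x| ≤ lam := by
      calc |∑ i, μ i * g i x| ≤ Real.sqrt (∑ i, μ i ^ 2) * M := le_trans habs hb
        _ = M * Real.sqrt (∑ i, μ i ^ 2) := mul_comm _ _
        _ ≤ lam := hlamT
    rw [show ∑ i, μ i / lam * g i x = (∑ i, μ i * g i x) / lam by
      rw [Finset.sum_div]; exact Finset.sum_congr rfl fun i _ => by ring,
      abs_div, abs_of_pos hlam, div_le_one hlam]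
    exact hsum
  have hmemv : v ∈ {r : ℝ | ∃ (w : Fin d → ℝ) (b : ℝ), r =
        (∑ x, ((1 / 2) * pX x * (1 + ρ * fs x)
            * max (1 - (1 : ℝ) * ((∑ i, w i * g i x) + b)) 0
          + (1 / 2) * pX x * (1 + ρ * (-1) * fs x)
            * max (1 - (-1 : ℝ) * ((∑ i, w i * g i x) + b)) 0))
        + lam / 2 * ∑ i, w i ^ 2} := by
    refine ⟨fun i => μ i / lam, 0, ?_⟩
    have hmaxeq : ∀ x,
        (1 / 2) * pX x * (1 + ρ * fs x)
            * max (1 - (1 : ℝ) * ((∑ i, μ i / lam * g i x) + 0)) 0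
          + (1 / 2) * pX x * (1 + ρ * (-1) * fs x)
            * max (1 - (-1 : ℝ) * ((∑ i, μ i / lam * g i x) + 0)) 0
        = (1 / 2) * pX x * (1 + ρ * fs x)
            * (1 - (1 : ℝ) * ((∑ i, μ i / lam * g i x) + 0))
          + (1 / 2) * pX x * (1 + ρ * (-1) * fs x)
            * (1 - (-1 : ℝ) * ((∑ i, μ i / lam * g i x) + 0)) := by
      intro x
      have := hsmall x
      have h1 : (0:ℝ) ≤ 1 - (1 : ℝ) * ((∑ i, μ i / lam * g i x) + 0) := by
        have := le_abs_self (∑ i, μ i / lam * g i x); linarith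
      have h2 : (0:ℝ) ≤ 1 - (-1 : ℝ) * ((∑ i, μ i / lam * g i x) + 0) := by
        have := neg_abs_le (∑ i, μ i / lam * g i x); linarith
      rw [max_eq_left h1, max_eq_left h2]
    simp_rw [hmaxeq]
    rw [hlin (fun i => μ i / lam) 0, hvμ]
    have e1 : ∑ i, μ i * (μ i / lam) = (∑ i, μ i ^ 2) / lam := by
      rw [Finset.sum_div]; exact Finset.sum_congr rfl fun i _ => by ring
    have e2 : ∑ i, (μ i / lam) ^ 2 = (∑ i, μ i ^ 2) / lam ^ 2 := by
      rw [Finset.sum_div]; exact Finset.sum_congr rfl fun i _ => by ring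
    rw [e1, e2]
    field_simp
    ring
  exact le_antisymm (csInf_le ⟨v, hSlb⟩ hmemv) (le_csInf ⟨v, hmemv⟩ hSlb)
end
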